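/- arXiv:2206.02863 — 3 statements merged into one kernel-verified Lean document; each statement's English description precedes it below -/
import Mathlib

section
/- Let n be a positive integer and let M be an n×n matrix with all entries in {−1, 1}. Then there exists an (n+1)×(n+1) matrix N with all entries in {−1, 1} such that ‖N‖_S = ‖M‖_S. In other words, σ_n ⊆ σ_{n+1}, where σ_n denotes the set of Schur norms of n×n sign matrices. -/
open scoped ComplexOrder

/-- The operator norm (induced by Euclidean norms) of a complex matrix. -/
noncomputable def Matrix.copNorm {m n : Type*} [Fintype m] [Fintype n] [DecidableEq n]
    (M : Matrix m n ℂ) : ℝ :=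
  ‖LinearMap.toContinuousLinearMap (Matrix.toEuclideanLin M)‖

/-- The operator norm (induced by Euclidean norms) of a real matrix. -/
noncomputable def Matrix.ropNorm {m n : Type*} [Fintype m] [Fintype n] [DecidableEq n]
    (M : Matrix m n ℝ) : ℝ :=
  ‖LinearMap.toContinuousLinearMap (Matrix.toEuclideanLin M)‖

/-- The Schur norm of a complex square matrix: the supremum of `‖M ∘ C‖` over all
complex contractions `C`, where `∘` is the entrywise (Schur/Hadamard) product. -/
noncomputable def Matrix.schurNorm {n : Type*} [Fintype n] [DecidableEq n]
    (M : Matrix n n ℂ) : ℝ :=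
  sSup {x | ∃ C : Matrix n n ℂ, Matrix.copNorm C ≤ 1 ∧ x = Matrix.copNorm (Matrix.hadamard M C)}

/-- `rSchur n`: the supremum of Schur norms of `n × n` real matrices whose entries all have
absolute value at most `1`. -/
noncomputable def rSchur (n : ℕ) : ℝ :=
  sSup {x | ∃ M : Matrix (Fin n) (Fin n) ℝ, (∀ i j, |M i j| ≤ 1) ∧
    x = Matrix.schurNorm (M.map Complex.ofReal)}

/-!
Take `N = M.submatrix f f` for a surjection `f : Fin (n + 1) → Fin n`, i.e. duplicate a row and a
column of `M`. It suffices that `‖A.submatrix f f‖_S ≤ ‖A‖_S` for every map `f`: applied to a right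
inverse of `f`, it also gives the reverse inequality.
For this, let `C` be a contraction, `x` a vector and `y = (A.submatrix f f ⊙ C) x`. Let `U`, `V` be
the matrices whose `k`-th columns are the normalised restrictions of `y`, `x` to the fibre `f⁻¹ k`,
and `a x` the vector of fibrewise norms of `x`. Then `Uᴴ y = a y`, `x = V (a x)`, both preserving
norms, and `Uᴴ (A.submatrix f f ⊙ C) V = A ⊙ (Uᴴ C V)`, where `Uᴴ C V` is again a contraction;
hence `‖y‖ = ‖(A ⊙ (Uᴴ C V)) (a x)‖ ≤ ‖A‖_S ‖x‖`.
-/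
open Finset WithLp
open scoped Matrix Matrix.Norms.L2Operator

namespace Matrix

theorem l2_opNorm_le_of_mulVec {𝕜 m n : Type*} [RCLike 𝕜] [Fintype m] [Fintype n]
    [DecidableEq n] {A : Matrix m n 𝕜} {c : ℝ} (hc : 0 ≤ c)
    (h : ∀ x : EuclideanSpace 𝕜 n, ‖toLp 2 (A *ᵥ ofLp x)‖ ≤ c * ‖x‖) : ‖A‖ ≤ c :=
  ContinuousLinearMap.opNorm_le_bound _ hc h

section SupportedOnGraph

variable {ι κ ι' κ' α : Type*}

def SupportedOnGraph [Zero α] (f : ι → κ) (U : Matrix ι κ α) : Prop :=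
  ∀ i k, f i ≠ k → U i k = 0

theorem conjTranspose_mul_hadamard_submatrix_mul [Fintype ι] [Fintype ι'] [CommSemiring α]
    [StarRing α] {f : ι → κ} {g : ι' → κ'} {U : Matrix ι κ α} {V : Matrix ι' κ' α}
    (hU : U.SupportedOnGraph f) (hV : V.SupportedOnGraph g) (A : Matrix κ κ' α)
    (C : Matrix ι ι' α) :
    Uᴴ * (A.submatrix f g ⊙ C) * V = A ⊙ (Uᴴ * C * V) := by
  ext k l
  simp only [mul_apply, hadamard_apply, submatrix_apply, conjTranspose_apply, Finset.mul_sum,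
    Finset.sum_mul]
  refine Finset.sum_congr rfl fun j _ => Finset.sum_congr rfl fun i _ => ?_
  by_cases hi : f i = k
  · by_cases hj : g j = l
    · rw [hi, hj]; ring
    · simp [hV j l hj]
  · simp [hU i k hi]

variable {𝕜 : Type*} [RCLike 𝕜] [Fintype κ]

theorem SupportedOnGraph.mulVec_apply {f : ι → κ} {U : Matrix ι κ 𝕜}
    (hU : U.SupportedOnGraph f) (z : κ → 𝕜) (i : ι) : (U *ᵥ z) i = U i (f i) * z (f i) :=
  Finset.sum_eq_single (f i) (fun k _ hk => by simp [hU i k (Ne.symm hk)]) (by simp)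

theorem l2_opNorm_le_one_of_supportedOnGraph [Fintype ι] [DecidableEq κ] {f : ι → κ}
    {U : Matrix ι κ 𝕜} (hU : U.SupportedOnGraph f) (hcol : ∀ k, ∑ i, ‖U i k‖ ^ 2 ≤ 1) :
    ‖U‖ ≤ 1 := by
  refine l2_opNorm_le_of_mulVec zero_le_one fun z => ?_
  rw [one_mul, ← sq_le_sq₀ (norm_nonneg _) (norm_nonneg _), EuclideanSpace.norm_sq_eq,
    EuclideanSpace.norm_sq_eq]
  calc ∑ i, ‖(U *ᵥ ofLp z) i‖ ^ 2 = ∑ k, (∑ i with f i = k, ‖U i k‖ ^ 2) * ‖z k‖ ^ 2 := by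
        simp only [hU.mulVec_apply, norm_mul, mul_pow, Finset.sum_mul]
        refine (Finset.sum_fiberwise univ f _).symm.trans (Finset.sum_congr rfl fun k _ => ?_)
        exact Finset.sum_congr rfl fun i hi => by rw [(Finset.mem_filter.mp hi).2]
    _ ≤ ∑ k, ‖z k‖ ^ 2 := by
        gcongr with k
        refine mul_le_of_le_one_left (by positivity) ?_
        exact (Finset.sum_le_univ_sum_of_nonneg fun _ => by positivity).trans (hcol k)

end SupportedOnGraph

end Matrix

section Fiber

variable {𝕜 ι κ : Type*} [RCLike 𝕜] [Fintype ι] [DecidableEq κ] (f : ι → κ)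
  (x : EuclideanSpace 𝕜 ι)

noncomputable def fiberNorms : EuclideanSpace 𝕜 κ :=
  toLp 2 fun k => ((√(∑ i with f i = k, ‖x i‖ ^ 2) : ℝ) : 𝕜)

theorem norm_fiberNorms_apply_sq (k : κ) :
    ‖fiberNorms f x k‖ ^ 2 = ∑ i with f i = k, ‖x i‖ ^ 2 := by
  rw [fiberNorms, RCLike.norm_ofReal, sq_abs, Real.sq_sqrt (by positivity)]

theorem norm_fiberNorms [Fintype κ] : ‖fiberNorms f x‖ = ‖x‖ := by
  rw [← sq_eq_sq₀ (norm_nonneg _) (norm_nonneg _), EuclideanSpace.norm_sq_eq,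
    EuclideanSpace.norm_sq_eq]
  simp only [norm_fiberNorms_apply_sq]
  exact Finset.sum_fiberwise univ f _

theorem apply_eq_zero_of_fiberNorms_eq_zero {i : ι} (h : fiberNorms f x (f i) = 0) :
    x i = 0 := by
  have hle : ‖x i‖ ^ 2 ≤ ‖fiberNorms f x (f i)‖ ^ 2 := by
    rw [norm_fiberNorms_apply_sq]
    exact Finset.single_le_sum (f := fun j => ‖x j‖ ^ 2) (fun _ _ => by positivity) (by simp)
  rw [h, norm_zero, sq_le_sq₀ (norm_nonneg _) le_rfl] at hle
  exact norm_le_zero_iff.mp hle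

/-- Column `k` is `x` restricted to the fibre `f⁻¹ k` and normalised, or zero when that restriction
vanishes (as `x / 0 = 0`). -/
noncomputable def fiberFrame : Matrix ι κ 𝕜 :=
  Matrix.of fun i k => if f i = k then x i / fiberNorms f x k else 0

theorem supportedOnGraph_fiberFrame : (fiberFrame f x).SupportedOnGraph f := by
  intro i k h
  simp [fiberFrame, h]

theorem fiberFrame_mulVec_fiberNorms [Fintype κ] :
    fiberFrame f x *ᵥ ofLp (fiberNorms f x) = ofLp x := by
  ext i
  rw [(supportedOnGraph_fiberFrame f x).mulVec_apply]
  simpa [fiberFrame] using div_mul_cancel_of_imp (apply_eq_zero_of_fiberNorms_eq_zero f x)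

theorem conjTranspose_fiberFrame_mulVec :
    (fiberFrame f x)ᴴ *ᵥ ofLp x = ofLp (fiberNorms f x) := by
  ext k
  simp only [Matrix.mulVec, dotProduct, fiberFrame, Matrix.conjTranspose_apply, Matrix.of_apply,
    apply_ite star, star_zero, ite_mul, zero_mul, Finset.sum_ite, Finset.sum_const_zero, add_zero,
    star_div₀, RCLike.star_def, fiberNorms, RCLike.conj_ofReal, div_mul_eq_mul_div,
    RCLike.conj_mul]
  rw [← Finset.sum_div]
  exact_mod_cast Real.div_sqrt

theorem l2_opNorm_fiberFrame_le_one [Fintype κ] : ‖fiberFrame f x‖ ≤ 1 := by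
  refine Matrix.l2_opNorm_le_one_of_supportedOnGraph (supportedOnGraph_fiberFrame f x)
    fun k => ?_
  simp only [fiberFrame, Matrix.of_apply, apply_ite (fun z : 𝕜 => ‖z‖ ^ 2), norm_zero, ne_eq,
    OfNat.ofNat_ne_zero, not_false_eq_true, zero_pow, Finset.sum_ite, Finset.sum_const_zero,
    add_zero, norm_div, div_pow]
  rw [← Finset.sum_div, ← norm_fiberNorms_apply_sq]
  exact div_self_le_one _

end Fiber

namespace Matrix

variable {ι κ : Type*} [Fintype ι] [DecidableEq ι] [Fintype κ] [DecidableEq κ]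

theorem bddAbove_schurNorm_set (A : Matrix ι ι ℂ) :
    BddAbove {x | ∃ C : Matrix ι ι ℂ, C.copNorm ≤ 1 ∧ x = (A ⊙ C).copNorm} := by
  let L : Matrix ι ι ℂ →L[ℂ] Matrix ι ι ℂ := LinearMap.toContinuousLinearMap
    { toFun := (A ⊙ ·)
      map_add' := fun B C => hadamard_add A B C
      map_smul' := fun c C => hadamard_smul A C c }
  refine ⟨‖L‖, ?_⟩
  rintro _ ⟨C, hC, rfl⟩
  exact (L.le_opNorm C).trans (mul_le_of_le_one_right (norm_nonneg _) hC)

theorem l2_opNorm_hadamard_le_schurNorm (A : Matrix ι ι ℂ) {C : Matrix ι ι ℂ} (hC : ‖C‖ ≤ 1) :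
    ‖A ⊙ C‖ ≤ A.schurNorm :=
  le_csSup (bddAbove_schurNorm_set A) ⟨C, hC, rfl⟩

theorem schurNorm_le (A : Matrix ι ι ℂ) {c : ℝ}
    (h : ∀ C : Matrix ι ι ℂ, ‖C‖ ≤ 1 → ‖A ⊙ C‖ ≤ c) : A.schurNorm ≤ c :=
  csSup_le ⟨_, 0, by simp [copNorm], rfl⟩ fun _ ⟨C, hC, hx⟩ => hx ▸ h C hC

theorem schurNorm_nonneg (A : Matrix ι ι ℂ) : 0 ≤ A.schurNorm :=
  (norm_nonneg _).trans (l2_opNorm_hadamard_le_schurNorm A (C := 0) (by simp))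

theorem schurNorm_submatrix_le (A : Matrix κ κ ℂ) (f : ι → κ) :
    (A.submatrix f f).schurNorm ≤ A.schurNorm := by
  refine schurNorm_le _ fun C hC => l2_opNorm_le_of_mulVec (schurNorm_nonneg A) fun x => ?_
  set y : EuclideanSpace ℂ ι := toLp 2 ((A.submatrix f f ⊙ C) *ᵥ ofLp x)
  set U := fiberFrame f y
  set V := fiberFrame f x
  have hUCV : ‖Uᴴ * C * V‖ ≤ 1 := by
    calc ‖Uᴴ * C * V‖ ≤ ‖Uᴴ‖ * ‖C‖ * ‖V‖ :=
          (l2_opNorm_mul _ _).trans (by gcongr; exact l2_opNorm_mul _ _)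
      _ ≤ 1 * 1 * 1 := by
          rw [l2_opNorm_conjTranspose]
          gcongr
          exacts [l2_opNorm_fiberFrame_le_one f y, l2_opNorm_fiberFrame_le_one f x]
      _ = 1 := by norm_num
  calc ‖y‖ = ‖fiberNorms f y‖ := (norm_fiberNorms f y).symm
    _ = ‖toLp 2 ((Uᴴ * (A.submatrix f f ⊙ C) * V) *ᵥ ofLp (fiberNorms f x))‖ := by
        rw [← mulVec_mulVec, ← mulVec_mulVec, fiberFrame_mulVec_fiberNorms,
          conjTranspose_fiberFrame_mulVec]
    _ = ‖toLp 2 ((A ⊙ (Uᴴ * C * V)) *ᵥ ofLp (fiberNorms f x))‖ := by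
        rw [conjTranspose_mul_hadamard_submatrix_mul (supportedOnGraph_fiberFrame f y)
          (supportedOnGraph_fiberFrame f x)]
    _ ≤ ‖A ⊙ (Uᴴ * C * V)‖ * ‖fiberNorms f x‖ := l2_opNorm_mulVec _ _
    _ ≤ A.schurNorm * ‖x‖ := by
        rw [norm_fiberNorms]
        gcongr
        exact l2_opNorm_hadamard_le_schurNorm A hUCV

theorem schurNorm_submatrix_of_surjective (A : Matrix κ κ ℂ) {f : ι → κ}
    (hf : Function.Surjective f) : (A.submatrix f f).schurNorm = A.schurNorm := by
  refine le_antisymm (schurNorm_submatrix_le A f) ?_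
  calc A.schurNorm
      = ((A.submatrix f f).submatrix (Function.surjInv hf) (Function.surjInv hf)).schurNorm := by
        rw [submatrix_submatrix, (Function.rightInverse_surjInv hf).comp_eq_id, submatrix_id_id]
    _ ≤ (A.submatrix f f).schurNorm := schurNorm_submatrix_le _ _

end Matrix

/-- For every `n × n` sign matrix `M` there is an `(n+1) × (n+1)` sign matrix with the same
Schur norm; i.e. `σ_n ⊆ σ_{n+1}`. -/
theorem schur_spectrum_mono (n : ℕ) (hn : 0 < n) (M : Matrix (Fin n) (Fin n) ℝ)
    (hM : ∀ i j, M i j = 1 ∨ M i j = -1) :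
    ∃ N : Matrix (Fin (n + 1)) (Fin (n + 1)) ℝ, (∀ i j, N i j = 1 ∨ N i j = -1) ∧
      Matrix.schurNorm (N.map Complex.ofReal) = Matrix.schurNorm (M.map Complex.ofReal) := by
  let f : Fin (n + 1) → Fin n := Fin.predAbove ⟨0, hn⟩
  refine ⟨M.submatrix f f, fun i j => hM (f i) (f j), ?_⟩
  rw [← Matrix.submatrix_map,
    Matrix.schurNorm_submatrix_of_surjective _ (Fin.predAbove_surjective _)]
end

section
/- Let n and m be positive integers, let A be an n×n matrix with entries in {−1, 1}, and let B be an m×m matrix with entries in {−1, 1}. Then there exists an nm×nm matrix C with entries in {−1, 1} (namely, the Kronecker product A ⊗ B) such that ‖C‖_S = ‖A‖_S · ‖B‖_S. In other words, σ_n σ_m ⊆ σ_{nm}. -/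
open scoped ComplexOrder

/-!
The Schur norm of `M` is the operator norm of the Schur multiplier `C ↦ M ⊙ C`. Testing
`A ⊗ B` against Kronecker products `C_A ⊗ C_B` of contractions, and using that the operator
norm is multiplicative on Kronecker products, gives `‖A‖_S ‖B‖_S ≤ ‖A ⊗ B‖_S`. Conversely
`A ⊗ B = (A ⊗ J) ⊙ (J ⊗ B)` for the all-ones matrix `J`, the Schur norm is submultiplicative
for `⊙`, and inflating `B` to `B ⊗ J` does not increase its Schur norm: factoring vectors
blockwise as `x = V a`, `y = U b` with block-diagonal contractions `U`, `V` turns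
`⟪((B ⊗ J) ⊙ C) x, y⟫` into `⟪(B ⊙ Uᴴ C V) a, b⟫`, where `Uᴴ C V` is again a contraction.
Reindexing along `Fin n × Fin m ≃ Fin (n * m)` preserves both the Schur norm and the signs.
-/

open scoped Matrix.Norms.L2Operator Kronecker
open WithLp

theorem ContinuousLinearMap.opNorm_mul_opNorm_le {𝕜 E F G H : Type*} [RCLike 𝕜]
    [SeminormedAddCommGroup E] [NormedSpace 𝕜 E] [SeminormedAddCommGroup F] [NormedSpace 𝕜 F]
    [SeminormedAddCommGroup G] [NormedSpace 𝕜 G] [SeminormedAddCommGroup H] [NormedSpace 𝕜 H]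
    (f : E →L[𝕜] F) (g : G →L[𝕜] H) {c : ℝ} (hc : 0 ≤ c)
    (h : ∀ x y, ‖f x‖ * ‖g y‖ ≤ c * ‖x‖ * ‖y‖) : ‖f‖ * ‖g‖ ≤ c := by
  have hf : ∀ y, ‖f‖ * ‖g y‖ ≤ c * ‖y‖ := fun y => by
    have := (((‖g y‖ : ℝ) : 𝕜) • f).opNorm_le_bound (M := c * ‖y‖) (by positivity) fun x => by
      rw [smul_apply, norm_smul, RCLike.norm_ofReal, abs_norm]
      linarith [h x y]
    rwa [norm_smul, RCLike.norm_ofReal, abs_norm, mul_comm] at this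
  have := (((‖f‖ : ℝ) : 𝕜) • g).opNorm_le_bound hc fun y => by
    rw [smul_apply, norm_smul, RCLike.norm_ofReal, abs_norm]
    exact hf y
  rwa [norm_smul, RCLike.norm_ofReal, abs_norm] at this

theorem EuclideanSpace.norm_toLp_mul {𝕜 m n : Type*} [RCLike 𝕜] [Fintype m] [Fintype n]
    (x : m → 𝕜) (y : n → 𝕜) :
    ‖toLp 2 (fun q : m × n => x q.1 * y q.2)‖ = ‖toLp 2 x‖ * ‖toLp 2 y‖ := by
  simp only [EuclideanSpace.norm_eq]
  rw [← Real.sqrt_mul (by positivity)]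
  simp [Fintype.sum_prod_type, Finset.sum_mul_sum, norm_mul, mul_pow]

namespace Matrix

variable {m n : Type*}

section StarAlgHom

variable (R : Type*) [CommSemiring R] [StarRing R]
  [Fintype m] [DecidableEq m] [Fintype n] [DecidableEq n]

def reindexStarAlgEquiv (e : m ≃ n) : Matrix m m R ≃⋆ₐ[R] Matrix n n R :=
  .ofAlgEquiv (reindexAlgEquiv R R e) fun M => (conjTranspose_reindex e e M).symm

def kroneckerOneStarAlgHom : Matrix m m R →⋆ₐ[R] Matrix (m × n) (m × n) R where
  toFun A := A ⊗ₖ 1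
  map_one' := one_kronecker_one
  map_mul' A B := by rw [← mul_kronecker_mul, one_mul]
  map_zero' := zero_kronecker _
  map_add' A B := add_kronecker _ _ _
  commutes' r := by simp [Algebra.algebraMap_eq_smul_one, smul_kronecker]
  map_star' A := by simp [star_eq_conjTranspose, conjTranspose_kronecker]

end StarAlgHom

theorem one_kronecker_eq_reindex {R : Type*} [CommSemiring R] [DecidableEq m]
    (B : Matrix n n R) :
    (1 : Matrix m m R) ⊗ₖ B = reindex (Equiv.prodComm n m) (Equiv.prodComm n m) (B ⊗ₖ 1) := by
  ext ⟨i, k⟩ ⟨j, l⟩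
  simp [mul_comm]

theorem kronecker_mulVec_kronecker {R l p : Type*} [CommSemiring R] [Fintype m] [Fintype p]
    (A : Matrix l m R) (B : Matrix n p R) (x : m → R) (y : p → R) :
    (A ⊗ₖ B) *ᵥ (fun q => x q.1 * y q.2) = fun q => (A *ᵥ x) q.1 * (B *ᵥ y) q.2 := by
  ext q
  simp only [mulVec, dotProduct, Fintype.sum_prod_type, Finset.sum_mul_sum, kroneckerMap_apply]
  refine Finset.sum_congr rfl fun _ _ => Finset.sum_congr rfl fun _ _ => ?_
  ring

section BlockColumns

variable [DecidableEq m]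

def blockColumns (u : m → EuclideanSpace ℂ n) : Matrix (m × n) m ℂ :=
  of fun p i => if p.1 = i then u i p.2 else 0

theorem blockColumns_apply_of_ne (u : m → EuclideanSpace ℂ n) {p : m × n} {i : m}
    (h : p.1 ≠ i) : blockColumns u p i = 0 :=
  if_neg h

theorem blockColumns_mulVec [Fintype m] (u : m → EuclideanSpace ℂ n) (a : m → ℂ) :
    blockColumns u *ᵥ a = fun p => u p.1 p.2 * a p.1 := by
  ext p
  simp [blockColumns, mulVec, dotProduct]

end BlockColumns

variable [Fintype m] [Fintype n]

theorem conjTranspose_mul_kronecker_ones_hadamard_mul {R : Type*} [CommSemiring R] [StarRing R]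
    {U V : Matrix (m × n) m R} (hU : ∀ p i, p.1 ≠ i → U p i = 0)
    (hV : ∀ p i, p.1 ≠ i → V p i = 0) (B : Matrix m m R) (C : Matrix (m × n) (m × n) R) :
    Uᴴ * ((B ⊗ₖ of fun _ _ => 1) ⊙ C) * V = B ⊙ (Uᴴ * C * V) := by
  ext i j
  simp only [mul_apply, hadamard_apply, kroneckerMap_apply, of_apply, mul_one, conjTranspose_apply,
    Finset.sum_mul, Finset.mul_sum]
  refine Finset.sum_congr rfl fun q _ => Finset.sum_congr rfl fun p _ => ?_
  by_cases hp : p.1 = i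
  · by_cases hq : q.1 = j
    · subst hp hq; ring
    · simp [hV q j hq]
  · simp [hU p i hp]

theorem inner_toLp_mulVec_eq_conjTranspose_mul {𝕜 : Type*} [RCLike 𝕜] (M : Matrix n n 𝕜)
    (U V : Matrix n m 𝕜) (a b : m → 𝕜) :
    inner 𝕜 (toLp 2 (M *ᵥ V *ᵥ a)) (toLp 2 (U *ᵥ b)) =
      inner 𝕜 (toLp 2 ((Uᴴ * M * V) *ᵥ a)) (toLp 2 b) := by
  simp only [EuclideanSpace.inner_toLp_toLp]
  rw [dotProduct_comm, dotProduct_mulVec, dotProduct_comm]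
  simp [star_mulVec, conjTranspose_mul, vecMul_vecMul, Matrix.mul_assoc]

noncomputable def schurMultiplier (M : Matrix n n ℂ) : Matrix n n ℂ →L[ℂ] Matrix n n ℂ :=
  LinearMap.toContinuousLinearMap
    { toFun := (M ⊙ ·)
      map_add' := fun B C => hadamard_add M B C
      map_smul' := fun c C => hadamard_smul M C c }

@[simp]
theorem schurMultiplier_apply (M C : Matrix n n ℂ) : schurMultiplier M C = M ⊙ C := by
  simp [schurMultiplier]

variable [DecidableEq m]

theorem copNorm_eq_norm (M : Matrix n m ℂ) : M.copNorm = ‖M‖ := rfl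

theorem norm_blockColumns_le {u : m → EuclideanSpace ℂ n} (hu : ∀ i, ‖u i‖ ≤ 1) :
    ‖blockColumns u‖ ≤ 1 := by
  rw [l2_opNorm_def]
  refine ContinuousLinearMap.opNorm_le_bound _ zero_le_one fun a => ?_
  rw [one_mul, ← sq_le_sq₀ (norm_nonneg _) (norm_nonneg _)]
  simp only [LinearEquiv.trans_apply, LinearMap.coe_toContinuousLinearMap', toLpLin_apply,
    EuclideanSpace.norm_sq_eq, blockColumns_mulVec, Fintype.sum_prod_type, norm_mul, mul_pow,
    ← Finset.sum_mul]
  refine Finset.sum_le_sum fun i _ => mul_le_of_le_one_left (by positivity) ?_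
  rw [← EuclideanSpace.norm_sq_eq]
  exact pow_le_one₀ (norm_nonneg _) (hu i)

theorem exists_eq_blockColumns_mulVec (x : EuclideanSpace ℂ (m × n)) :
    ∃ (u : m → EuclideanSpace ℂ n) (a : EuclideanSpace ℂ m),
      (∀ i, ‖u i‖ ≤ 1) ∧ ‖a‖ = ‖x‖ ∧ x = toLp 2 (blockColumns u *ᵥ ofLp a) := by
  let block (i : m) : EuclideanSpace ℂ n := toLp 2 fun k => x (i, k)
  refine ⟨fun i => ((‖block i‖⁻¹ : ℝ) : ℂ) • block i, toLp 2 fun i => (‖block i‖ : ℂ),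
    fun i => ?_, ?_, ?_⟩
  · rw [norm_smul, Complex.norm_real, norm_inv, norm_norm]
    exact inv_mul_le_one_of_le₀ le_rfl (norm_nonneg _)
  · rw [← sq_eq_sq₀ (norm_nonneg _) (norm_nonneg _), EuclideanSpace.norm_sq_eq,
      EuclideanSpace.norm_sq_eq, Fintype.sum_prod_type]
    simp [block, EuclideanSpace.norm_sq_eq]
  · ext ⟨i, k⟩
    by_cases h : block i = 0
    · have hx : x (i, k) = 0 := congr_arg (fun v : EuclideanSpace ℂ n => v k) h
      simp [blockColumns_mulVec, h, hx]
    · have : (‖block i‖ : ℂ) ≠ 0 := by simpa using h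
      simp only [blockColumns_mulVec, PiLp.smul_apply, smul_eq_mul, Complex.ofReal_inv]
      rw [mul_comm, ← mul_assoc, mul_inv_cancel₀ this, one_mul]

theorem norm_mul_norm_le_norm_kronecker {𝕜 l p : Type*} [RCLike 𝕜] [Fintype l] [Fintype p]
    [DecidableEq p] (A : Matrix l m 𝕜) (B : Matrix n p 𝕜) : ‖A‖ * ‖B‖ ≤ ‖A ⊗ₖ B‖ := by
  simp only [l2_opNorm_def]
  refine ContinuousLinearMap.opNorm_mul_opNorm_le _ _ (norm_nonneg _) fun x y => ?_
  have := l2_opNorm_mulVec (A ⊗ₖ B) (toLp 2 fun q => x q.1 * y q.2)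
  rw [l2_opNorm_def] at this
  simpa [toLpLin_apply, kronecker_mulVec_kronecker, EuclideanSpace.norm_toLp_mul, mul_assoc]
    using this

variable [DecidableEq n]

theorem norm_reindex (e : m ≃ n) (M : Matrix m m ℂ) : ‖reindex e e M‖ = ‖M‖ :=
  StarAlgEquiv.norm_map (reindexStarAlgEquiv ℂ e) M

theorem norm_kronecker_one_le (A : Matrix m m ℂ) : ‖A ⊗ₖ (1 : Matrix n n ℂ)‖ ≤ ‖A‖ :=
  NonUnitalStarAlgHom.norm_apply_le (kroneckerOneStarAlgHom ℂ (n := n)) A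

theorem norm_kronecker_le (A : Matrix m m ℂ) (B : Matrix n n ℂ) : ‖A ⊗ₖ B‖ ≤ ‖A‖ * ‖B‖ := by
  have hB : ‖(1 : Matrix m m ℂ) ⊗ₖ B‖ ≤ ‖B‖ := by
    rw [one_kronecker_eq_reindex, norm_reindex]
    exact norm_kronecker_one_le B
  calc ‖A ⊗ₖ B‖ = ‖(A ⊗ₖ 1) * (1 ⊗ₖ B)‖ := by rw [← mul_kronecker_mul, mul_one, one_mul]
    _ ≤ ‖A ⊗ₖ (1 : Matrix n n ℂ)‖ * ‖(1 : Matrix m m ℂ) ⊗ₖ B‖ := norm_mul_le _ _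
    _ ≤ ‖A‖ * ‖B‖ := by gcongr; exact norm_kronecker_one_le A

theorem norm_kronecker (A : Matrix m m ℂ) (B : Matrix n n ℂ) : ‖A ⊗ₖ B‖ = ‖A‖ * ‖B‖ :=
  le_antisymm (norm_kronecker_le A B) (norm_mul_norm_le_norm_kronecker A B)

theorem schurNorm_eq_norm_schurMultiplier (M : Matrix n n ℂ) :
    M.schurNorm = ‖schurMultiplier M‖ := by
  rw [← ContinuousLinearMap.sSup_unitClosedBall_eq_norm, schurNorm]
  congr 1
  ext x
  simp [copNorm_eq_norm, eq_comm]

theorem schurNorm_nonneg_s9 (M : Matrix n n ℂ) : 0 ≤ M.schurNorm := by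
  rw [schurNorm_eq_norm_schurMultiplier]
  exact norm_nonneg _

theorem norm_hadamard_le_schurNorm_mul (M C : Matrix n n ℂ) :
    ‖M ⊙ C‖ ≤ M.schurNorm * ‖C‖ := by
  rw [schurNorm_eq_norm_schurMultiplier]
  simpa using (schurMultiplier M).le_opNorm C

theorem schurNorm_le_of_forall {M : Matrix n n ℂ} {c : ℝ} (hc : 0 ≤ c)
    (h : ∀ C, ‖M ⊙ C‖ ≤ c * ‖C‖) : M.schurNorm ≤ c := by
  rw [schurNorm_eq_norm_schurMultiplier]
  exact (schurMultiplier M).opNorm_le_bound hc (by simpa using h)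

theorem schurNorm_hadamard_le (M N : Matrix n n ℂ) :
    (M ⊙ N).schurNorm ≤ M.schurNorm * N.schurNorm := by
  simp only [schurNorm_eq_norm_schurMultiplier]
  have : schurMultiplier (M ⊙ N) = (schurMultiplier M).comp (schurMultiplier N) := by
    ext1 C
    simp [hadamard_assoc]
  rw [this]
  exact (schurMultiplier M).opNorm_comp_le _

theorem schurNorm_reindex_le (e : m ≃ n) (M : Matrix m m ℂ) :
    (reindex e e M).schurNorm ≤ M.schurNorm := by
  refine schurNorm_le_of_forall (schurNorm_nonneg_s9 M) fun C => ?_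
  have : reindex e e M ⊙ C = reindex e e (M ⊙ reindex e.symm e.symm C) := by
    ext; simp
  rw [this, norm_reindex, ← norm_reindex e.symm C]
  exact norm_hadamard_le_schurNorm_mul _ _

theorem schurNorm_reindex (e : m ≃ n) (M : Matrix m m ℂ) :
    (reindex e e M).schurNorm = M.schurNorm :=
  le_antisymm (schurNorm_reindex_le e M)
    (by simpa using schurNorm_reindex_le e.symm (reindex e e M))

theorem norm_kronecker_ones_hadamard_le (B : Matrix m m ℂ) (C : Matrix (m × n) (m × n) ℂ) :
    ‖(B ⊗ₖ of fun _ _ => 1) ⊙ C‖ ≤ B.schurNorm * ‖C‖ := by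
  have hB := schurNorm_nonneg_s9 B
  rw [cstar_norm_def]
  refine ContinuousLinearMap.opNorm_le_of_re_inner_le (by positivity) fun x y hx hy => ?_
  obtain ⟨v, a, hv, ha, rfl⟩ := exists_eq_blockColumns_mulVec x
  obtain ⟨u, b, hu, hb, rfl⟩ := exists_eq_blockColumns_mulVec y
  set D := (blockColumns u)ᴴ * C * blockColumns v
  have hD : ‖D‖ ≤ ‖C‖ := calc
    ‖D‖ ≤ ‖(blockColumns u)ᴴ‖ * ‖C‖ * ‖blockColumns v‖ :=
      (l2_opNorm_mul _ _).trans (by gcongr; exact l2_opNorm_mul _ _)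
    _ ≤ 1 * ‖C‖ * 1 := by
      rw [l2_opNorm_conjTranspose]
      gcongr
      exacts [norm_blockColumns_le hu, norm_blockColumns_le hv]
    _ = ‖C‖ := by ring
  rw [toEuclideanCLM_toLp, inner_toLp_mulVec_eq_conjTranspose_mul,
    conjTranspose_mul_kronecker_ones_hadamard_mul (fun _ _ => blockColumns_apply_of_ne u)
      (fun _ _ => blockColumns_apply_of_ne v)]
  calc RCLike.re (inner ℂ (toLp 2 ((B ⊙ D) *ᵥ ofLp a)) (toLp 2 (ofLp b)))
      ≤ ‖toLp 2 ((B ⊙ D) *ᵥ ofLp a)‖ * ‖b‖ :=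
        (RCLike.re_le_norm _).trans (norm_inner_le_norm _ _)
    _ ≤ ‖B ⊙ D‖ * ‖a‖ * ‖b‖ := by gcongr; exact l2_opNorm_mulVec _ _
    _ ≤ B.schurNorm * ‖C‖ * 1 * 1 := by
      rw [ha, hb, hx, hy]
      gcongr
      exact (norm_hadamard_le_schurNorm_mul B D).trans (by gcongr)
    _ = B.schurNorm * ‖C‖ := by ring

theorem schurNorm_kronecker_ones_le (B : Matrix m m ℂ) :
    (B ⊗ₖ (of fun _ _ => 1 : Matrix n n ℂ)).schurNorm ≤ B.schurNorm :=
  schurNorm_le_of_forall (schurNorm_nonneg_s9 B) (norm_kronecker_ones_hadamard_le B)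

theorem schurNorm_kronecker (A : Matrix m m ℂ) (B : Matrix n n ℂ) :
    (A ⊗ₖ B).schurNorm = A.schurNorm * B.schurNorm := by
  refine le_antisymm ?_ ?_
  · have : A ⊗ₖ B = (A ⊗ₖ of fun _ _ => 1) ⊙
        reindex (Equiv.prodComm n m) (Equiv.prodComm n m) (B ⊗ₖ of fun _ _ => 1) := by
      ext; simp
    rw [this]
    refine (schurNorm_hadamard_le _ _).trans ?_
    rw [schurNorm_reindex]
    exact mul_le_mul (schurNorm_kronecker_ones_le A) (schurNorm_kronecker_ones_le B)
      (schurNorm_nonneg_s9 _) (schurNorm_nonneg_s9 A)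
  · rw [schurNorm_eq_norm_schurMultiplier A, schurNorm_eq_norm_schurMultiplier B]
    refine ContinuousLinearMap.opNorm_mul_opNorm_le _ _ (schurNorm_nonneg_s9 _) fun CA CB => ?_
    calc ‖schurMultiplier A CA‖ * ‖schurMultiplier B CB‖ = ‖(A ⊗ₖ B) ⊙ (CA ⊗ₖ CB)‖ := by
          rw [kronecker_hadamard_kronecker, norm_kronecker, schurMultiplier_apply,
            schurMultiplier_apply]
      _ ≤ (A ⊗ₖ B).schurNorm * (‖CA‖ * ‖CB‖) := by
          rw [← norm_kronecker]
          exact norm_hadamard_le_schurNorm_mul _ _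
      _ = (A ⊗ₖ B).schurNorm * ‖CA‖ * ‖CB‖ := by ring

end Matrix

theorem schur_spectrum_mul_general (n m : ℕ)
    (A : Matrix (Fin n) (Fin n) ℝ) (hA : ∀ i j, A i j = 1 ∨ A i j = -1)
    (B : Matrix (Fin m) (Fin m) ℝ) (hB : ∀ i j, B i j = 1 ∨ B i j = -1) :
    ∃ C : Matrix (Fin (n * m)) (Fin (n * m)) ℝ, (∀ i j, C i j = 1 ∨ C i j = -1) ∧
      Matrix.schurNorm (C.map Complex.ofReal) =
        Matrix.schurNorm (A.map Complex.ofReal) * Matrix.schurNorm (B.map Complex.ofReal) := by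
  let e := finProdFinEquiv (m := n) (n := m)
  refine ⟨Matrix.reindex e e (A ⊗ₖ B), fun i j => ?_, ?_⟩
  · rcases hA (e.symm i).1 (e.symm j).1 with ha | ha <;>
      rcases hB (e.symm i).2 (e.symm j).2 with hb | hb <;> simp [ha, hb]
  · have : (Matrix.reindex e e (A ⊗ₖ B)).map Complex.ofReal
        = Matrix.reindex e e (A.map Complex.ofReal ⊗ₖ B.map Complex.ofReal) := by
      ext; simp
    rw [this, Matrix.schurNorm_reindex, Matrix.schurNorm_kronecker]

/-- For sign matrices `A` (`n × n`) and `B` (`m × m`) there is an `nm × nm` sign matrix `C`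
with `‖C‖_S = ‖A‖_S * ‖B‖_S`; i.e. `σ_n σ_m ⊆ σ_{nm}`. -/
theorem schur_spectrum_mul (n m : ℕ) (hn : 0 < n) (hm : 0 < m)
    (A : Matrix (Fin n) (Fin n) ℝ) (hA : ∀ i j, A i j = 1 ∨ A i j = -1)
    (B : Matrix (Fin m) (Fin m) ℝ) (hB : ∀ i j, B i j = 1 ∨ B i j = -1) :
    ∃ C : Matrix (Fin (n * m)) (Fin (n * m)) ℝ, (∀ i j, C i j = 1 ∨ C i j = -1) ∧
      Matrix.schurNorm (C.map Complex.ofReal) =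
        Matrix.schurNorm (A.map Complex.ofReal) * Matrix.schurNorm (B.map Complex.ofReal) :=
  schur_spectrum_mul_general n m A hA B hB
end

section
/- For every positive integer n, r_n ≥ √(n/2). -/
open scoped ComplexOrder

/-!
Let `H` be the discrete Hartley matrix, `H j k = cos (2πjk/n) + sin (2πjk/n)`. Its entries are
bounded by `√2` and `Hᵀ H = n • 1`, so `M = H / √2` has entries in `[-1, 1]` while `C = H / √n` is
orthogonal, hence a contraction. The entries of `M ∘ C` are `H j k ^ 2 / √(2n)`, so they sum to
`n ^ 2 / √(2n)`; testing `M ∘ C` against the all-ones vector, of norm `√n`, gives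
`‖M ∘ C‖ ≥ n / √(2n) = √(n / 2)`.
-/

open Complex Finset
open scoped Real Matrix

theorem sum_range_exp_two_pi_mul_I_div {n : ℕ} (hn : n ≠ 0) (m : ℤ) :
    ∑ k ∈ range n, exp (2 * π * I * m * k / n) = if (n : ℤ) ∣ m then (n : ℂ) else 0 := by
  set ζ := exp (2 * π * I / n)
  have hζ : IsPrimitiveRoot ζ n := isPrimitiveRoot_exp n hn
  have hpow (k : ℕ) : exp (2 * π * I * m * k / n) = (ζ ^ m) ^ k := by
    rw [← exp_int_mul, ← exp_nat_mul]
    ring_nf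
  simp_rw [hpow]
  split_ifs with hdvd
  · simp [(hζ.zpow_eq_one_iff_dvd m).mpr hdvd]
  · have hne : ζ ^ m ≠ 1 := mt (hζ.zpow_eq_one_iff_dvd m).mp hdvd
    have hpow_n : (ζ ^ m) ^ n = 1 := by
      rw [← zpow_natCast, ← zpow_mul, mul_comm, zpow_mul, zpow_natCast, hζ.pow_eq_one, one_zpow]
    rw [geom_sum_eq hne, hpow_n, sub_self, zero_div]

theorem exp_two_pi_mul_I_div_eq_exp_ofReal_mul_I (m : ℤ) (k n : ℕ) :
    exp (2 * π * I * m * k / n) = exp ((2 * π * m * k / n : ℝ) * I) := by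
  push_cast
  ring_nf

theorem sum_range_cos_two_pi_mul_div {n : ℕ} (hn : n ≠ 0) (m : ℤ) :
    ∑ k ∈ range n, Real.cos (2 * π * m * k / n) = if (n : ℤ) ∣ m then (n : ℝ) else 0 := by
  have h := congrArg re (sum_range_exp_two_pi_mul_I_div hn m)
  simp_rw [exp_two_pi_mul_I_div_eq_exp_ofReal_mul_I, re_sum, exp_ofReal_mul_I_re] at h
  rw [h, apply_ite re, natCast_re, zero_re]

theorem sum_range_sin_two_pi_mul_div {n : ℕ} (hn : n ≠ 0) (m : ℤ) :
    ∑ k ∈ range n, Real.sin (2 * π * m * k / n) = 0 := by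
  have h := congrArg im (sum_range_exp_two_pi_mul_I_div hn m)
  simp_rw [exp_two_pi_mul_I_div_eq_exp_ofReal_mul_I, im_sum, exp_ofReal_mul_I_im] at h
  rw [h, apply_ite im, natCast_im, zero_im, ite_self]

theorem cos_add_sin_mul_cos_add_sin (x y : ℝ) :
    (Real.cos x + Real.sin x) * (Real.cos y + Real.sin y) =
      Real.cos (x - y) + Real.sin (x + y) := by
  rw [Real.cos_sub, Real.sin_add]
  ring

theorem abs_cos_add_sin_le (x : ℝ) : |Real.cos x + Real.sin x| ≤ √2 :=
  Real.abs_le_sqrt <| by nlinarith [sq_nonneg (Real.cos x - Real.sin x), Real.sin_sq_add_cos_sq x]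

-- The discrete Hartley transform, with kernel `cas x = cos x + sin x`.
noncomputable def hartleyMatrix (n : ℕ) : Matrix (Fin n) (Fin n) ℝ :=
  Matrix.of fun j k => Real.cos (2 * π * j * k / n) + Real.sin (2 * π * j * k / n)

theorem abs_hartleyMatrix_apply_le {n : ℕ} (j k : Fin n) : |hartleyMatrix n j k| ≤ √2 :=
  abs_cos_add_sin_le _

theorem hartleyMatrix_transpose_mul {n : ℕ} (hn : n ≠ 0) :
    (hartleyMatrix n)ᵀ * hartleyMatrix n = (n : ℝ) • 1 := by
  ext j l
  have hprod (k : Fin n) : hartleyMatrix n k j * hartleyMatrix n k l =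
      Real.cos (2 * π * ((j - l : ℤ) : ℝ) * k / n) +
        Real.sin (2 * π * ((j + l : ℤ) : ℝ) * k / n) := by
    rw [hartleyMatrix, Matrix.of_apply, Matrix.of_apply, cos_add_sin_mul_cos_add_sin]
    push_cast
    ring_nf
  simp_rw [Matrix.mul_apply, Matrix.transpose_apply, hprod, sum_add_distrib,
    Fin.sum_univ_eq_sum_range (fun k => Real.cos (2 * π * ((j - l : ℤ) : ℝ) * k / n)),
    Fin.sum_univ_eq_sum_range (fun k => Real.sin (2 * π * ((j + l : ℤ) : ℝ) * k / n)),
    sum_range_cos_two_pi_mul_div hn, sum_range_sin_two_pi_mul_div hn, add_zero,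
    Matrix.smul_apply, Matrix.one_apply, smul_eq_mul, mul_ite, mul_one, mul_zero]
  refine if_congr ⟨fun hdvd => ?_, fun hjl => by simp [hjl]⟩ rfl rfl
  have := Int.eq_zero_of_abs_lt_dvd hdvd (by rw [abs_sub_lt_iff]; omega)
  omega

theorem EuclideanSpace.norm_le_sum_norm {𝕜 ι : Type*} [RCLike 𝕜] [Fintype ι]
    (y : EuclideanSpace 𝕜 ι) : ‖y‖ ≤ ∑ i, ‖y i‖ := by
  rw [EuclideanSpace.norm_eq]
  exact (Real.sqrt_le_left (by positivity)).mpr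
    (sum_sq_le_sq_sum_of_nonneg fun _ _ => norm_nonneg _)

theorem EuclideanSpace.norm_toLp_one {𝕜 ι : Type*} [RCLike 𝕜] [Fintype ι] :
    ‖(WithLp.toLp 2 (1 : ι → 𝕜) : EuclideanSpace 𝕜 ι)‖ = √(Fintype.card ι) := by
  simp [EuclideanSpace.norm_eq]

namespace Matrix

open scoped Norms.L2Operator

theorem conjTranspose_mul_self_map_ofReal {m n : Type*} [Fintype m] [DecidableEq n]
    {U : Matrix m n ℝ} (hU : Uᵀ * U = 1) :
    (U.map ofReal)ᴴ * U.map ofReal = 1 := by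
  rw [← conjTranspose_map _ fun x => (conj_ofReal x).symm, conjTranspose_eq_transpose_of_trivial]
  change Uᵀ.map ofRealHom * U.map ofRealHom = 1
  rw [← Matrix.map_mul, hU, Matrix.map_one _ ofRealHom.map_zero ofRealHom.map_one]

section L2OpNorm

variable {𝕜 m n : Type*} [RCLike 𝕜] [Fintype m] [Fintype n] [DecidableEq n]

theorem norm_entry_le_l2_opNorm (A : Matrix m n 𝕜) (i : m) (j : n) :
    ‖A i j‖ ≤ ‖A‖ := by
  have h := A.l2_opNorm_mulVec (EuclideanSpace.single j 1)
  rw [PiLp.norm_single, norm_one, mul_one] at h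
  refine le_trans (le_of_eq ?_) ((PiLp.norm_apply_le _ i).trans h)
  simp [mulVec_single]

theorem l2_opNorm_le_sum_norm_entries (A : Matrix m n 𝕜) : ‖A‖ ≤ ∑ i, ∑ j, ‖A i j‖ := by
  refine ContinuousLinearMap.opNorm_le_bound _ (by positivity) fun x => ?_
  refine (EuclideanSpace.norm_le_sum_norm _).trans ?_
  rw [sum_mul]
  refine sum_le_sum fun i _ => ?_
  calc ‖(A *ᵥ x.ofLp) i‖ ≤ ∑ j, ‖A i j‖ * ‖x j‖ := by
        simpa only [mulVec, dotProduct, norm_mul] using norm_sum_le univ fun j => A i j * x j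
    _ ≤ ∑ j, ‖A i j‖ * ‖x‖ := by gcongr; exact PiLp.norm_apply_le x _
    _ = (∑ j, ‖A i j‖) * ‖x‖ := (sum_mul ..).symm

theorem l2_opNorm_le_one_of_conjTranspose_mul_self_eq_one {A : Matrix m n 𝕜} (hA : Aᴴ * A = 1) :
    ‖A‖ ≤ 1 := by
  have hone : ‖(1 : Matrix n n 𝕜)‖ ≤ 1 := by
    rw [cstar_norm_def, map_one]
    exact ContinuousLinearMap.norm_id_le
  have := l2_opNorm_conjTranspose_mul_self A
  rw [hA] at this
  nlinarith [norm_nonneg A]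

theorem norm_sum_entries_le_l2_opNorm (A : Matrix m n 𝕜) :
    ‖∑ i, ∑ j, A i j‖ ≤ √(Fintype.card m) * √(Fintype.card n) * ‖A‖ := by
  have hinner : ∑ i, ∑ j, A i j =
      inner 𝕜 (WithLp.toLp 2 (1 : m → 𝕜)) ((EuclideanSpace.equiv m 𝕜).symm (A *ᵥ 1)) := by
    simp [EuclideanSpace.inner_toLp_toLp, dotProduct, mulVec]
  calc ‖∑ i, ∑ j, A i j‖ ≤ √(Fintype.card m) * (‖A‖ * √(Fintype.card n)) := by
        rw [hinner, ← EuclideanSpace.norm_toLp_one (𝕜 := 𝕜),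
          ← EuclideanSpace.norm_toLp_one (𝕜 := 𝕜)]
        exact (norm_inner_le_norm _ _).trans (by gcongr; exact A.l2_opNorm_mulVec _)
    _ = √(Fintype.card m) * √(Fintype.card n) * ‖A‖ := by ring

theorem l2_opNorm_hadamard_le (A B : Matrix m n 𝕜) (hA : ∀ i j, ‖A i j‖ ≤ 1) :
    ‖A ⊙ B‖ ≤ Fintype.card m * Fintype.card n * ‖B‖ := by
  calc ‖A ⊙ B‖ ≤ ∑ i, ∑ j, ‖A i j * B i j‖ := l2_opNorm_le_sum_norm_entries _
    _ ≤ ∑ _i : m, ∑ _j : n, ‖B‖ := by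
        gcongr with i _ j _
        rw [norm_mul]
        exact (mul_le_of_le_one_left (norm_nonneg _) (hA i j)).trans
          (norm_entry_le_l2_opNorm B i j)
    _ = Fintype.card m * Fintype.card n * ‖B‖ := by simp [mul_assoc]

theorem sum_sum_sq_eq_card_of_transpose_mul_self_eq_one {U : Matrix m n ℝ} (hU : Uᵀ * U = 1) :
    ∑ i, ∑ j, U i j ^ 2 = Fintype.card n := by
  have hcol (j : n) : ∑ i, U i j ^ 2 = 1 := by
    simpa [mul_apply, sq] using congrFun (congrFun hU j) j
  rw [sum_comm]
  simp [hcol]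

end L2OpNorm

section SchurNorm

variable {ι : Type*} [Fintype ι] [DecidableEq ι]

theorem copNorm_hadamard_le_card_mul_card {M C : Matrix ι ι ℂ} (hM : ∀ i j, ‖M i j‖ ≤ 1)
    (hC : C.copNorm ≤ 1) : (M ⊙ C).copNorm ≤ Fintype.card ι * Fintype.card ι :=
  (l2_opNorm_hadamard_le M C hM).trans (mul_le_of_le_one_right (by positivity) hC)

theorem copNorm_hadamard_le_schurNorm {M C : Matrix ι ι ℂ} (hM : ∀ i j, ‖M i j‖ ≤ 1)
    (hC : C.copNorm ≤ 1) : (M ⊙ C).copNorm ≤ M.schurNorm :=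
  le_csSup ⟨_, fun _ ⟨_, hC', hx⟩ => hx ▸ copNorm_hadamard_le_card_mul_card hM hC'⟩ ⟨C, hC, rfl⟩

theorem schurNorm_le_card_mul_card {M : Matrix ι ι ℂ} (hM : ∀ i j, ‖M i j‖ ≤ 1) :
    M.schurNorm ≤ Fintype.card ι * Fintype.card ι := by
  refine Real.sSup_le ?_ (by positivity)
  rintro x ⟨C, hC, rfl⟩
  exact copNorm_hadamard_le_card_mul_card hM hC

theorem inv_le_schurNorm_of_smul_orthogonal [Nonempty ι] {M : Matrix ι ι ℝ} {δ : ℝ} (hδ : 0 < δ)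
    (hM : ∀ i j, |M i j| ≤ 1) (hδM : (δ • M)ᵀ * (δ • M) = 1) :
    δ⁻¹ ≤ (M.map ofReal).schurNorm := by
  set C := (δ • M).map ofReal
  have hC : C.copNorm ≤ 1 :=
    l2_opNorm_le_one_of_conjTranspose_mul_self_eq_one (conjTranspose_mul_self_map_ofReal hδM)
  have hsum : ∑ i, ∑ j, (M.map ofReal ⊙ C) i j = ((δ⁻¹ * Fintype.card ι : ℝ) : ℂ) := by
    simp_rw [← sum_sum_sq_eq_card_of_transpose_mul_self_eq_one hδM, mul_sum]
    push_cast
    refine sum_congr rfl fun i _ => sum_congr rfl fun j _ => ?_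
    simp only [hadamard_apply, map_apply, C, smul_apply, smul_eq_mul, ofReal_mul]
    field_simp
  have hcard : (0 : ℝ) < Fintype.card ι := Nat.cast_pos.mpr Fintype.card_pos
  have hlower : Fintype.card ι * δ⁻¹ ≤ Fintype.card ι * ‖M.map ofReal ⊙ C‖ := by
    have h := norm_sum_entries_le_l2_opNorm (M.map ofReal ⊙ C)
    rw [hsum, norm_real, Real.norm_of_nonneg (by positivity),
      Real.mul_self_sqrt hcard.le, mul_comm] at h
    exact h
  exact (le_of_mul_le_mul_left hlower hcard).trans
    (copNorm_hadamard_le_schurNorm (by simpa using hM) hC)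

end SchurNorm

end Matrix

theorem schurNorm_le_rSchur {n : ℕ} {M : Matrix (Fin n) (Fin n) ℝ} (hM : ∀ i j, |M i j| ≤ 1) :
    (M.map ofReal).schurNorm ≤ rSchur n := by
  refine le_csSup ⟨Fintype.card (Fin n) * Fintype.card (Fin n), ?_⟩ ⟨M, hM, rfl⟩
  rintro x ⟨M', hM', rfl⟩
  exact Matrix.schurNorm_le_card_mul_card (by simpa using hM')

theorem inv_sqrt_smul_hartleyMatrix_transpose_mul_self {n : ℕ} (hn : n ≠ 0) :
    ((√n)⁻¹ • hartleyMatrix n)ᵀ * ((√n)⁻¹ • hartleyMatrix n) = 1 := by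
  have hsqrt : (√n)⁻¹ * (√n)⁻¹ * n = 1 := by
    rw [← mul_inv, Real.mul_self_sqrt (Nat.cast_nonneg n), inv_mul_cancel₀ (by positivity)]
  rw [Matrix.transpose_smul, Matrix.smul_mul, Matrix.mul_smul, hartleyMatrix_transpose_mul hn,
    smul_smul, smul_smul, hsqrt, one_smul]

/-- For every positive integer `n`, `r n ≥ √(n / 2)`. -/
theorem rSchur_ge_sqrt_half (n : ℕ) (hn : 0 < n) :
    Real.sqrt ((n : ℝ) / 2) ≤ rSchur n := by
  have : NeZero n := ⟨hn.ne'⟩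
  have hM (i j : Fin n) : |((√2)⁻¹ • hartleyMatrix n) i j| ≤ 1 := by
    rw [Matrix.smul_apply, smul_eq_mul, abs_mul, abs_inv, abs_of_pos (by positivity : (0 : ℝ) < √2),
      inv_mul_le_one₀ (by positivity)]
    exact abs_hartleyMatrix_apply_le i j
  have hδM : (√2 / √n) • (√2)⁻¹ • hartleyMatrix n = (√n)⁻¹ • hartleyMatrix n := by
    rw [smul_smul, div_mul_eq_mul_div, mul_inv_cancel₀ (by positivity), one_div]
  calc √(n / 2) = (√2 / √n)⁻¹ := by rw [inv_div, Real.sqrt_div' _ zero_le_two]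
    _ ≤ ((((√2)⁻¹ • hartleyMatrix n).map ofReal).schurNorm) :=
      Matrix.inv_le_schurNorm_of_smul_orthogonal (by positivity) hM
        (hδM ▸ inv_sqrt_smul_hartleyMatrix_transpose_mul_self hn.ne')
    _ ≤ rSchur n := schurNorm_le_rSchur hM
end
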